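/- For the process X^c constructed in the paper, its total variation on [0,T] satisfies the two-sided estimate TV^{2c}(X, T) ≤ TV(X^c, T) ≤ TV^{2c}(X, T) + 2c. -/

import Mathlib

open Set Filter MeasureTheory
open scoped ENNReal NNReal Topology

noncomputable section

/-- A function is càdlàg: right-continuous with left limits. -/
def Cadlag (f : ℝ → ℝ) : Prop :=
  (∀ t : ℝ, Tendsto f (nhdsWithin t (Ici t)) (nhds (f t))) ∧
  (∀ t : ℝ, ∃ l : ℝ, Tendsto f (nhdsWithin t (Iio t)) (nhds l))

/-- Jump of `f` at `s`. -/
def jumpAt (f : ℝ → ℝ) (s : ℝ) : ℝ := f s - Function.leftLim f s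

def supOn (f : ℝ → ℝ) (a b : ℝ) : ℝ := sSup (f '' Icc a b)
def infOn (f : ℝ → ℝ) (a b : ℝ) : ℝ := sInf (f '' Icc a b)

def TuZero (X : ℝ → ℝ) (c : ℝ) : ℝ≥0∞ :=
  sInf {u | ∃ s : ℝ, 0 ≤ s ∧ u = ENNReal.ofReal s ∧ supOn X 0 s - X 0 > c}

def TdIni (X : ℝ → ℝ) (c : ℝ) : ℝ≥0∞ :=
  sInf {u | ∃ s : ℝ, 0 ≤ s ∧ u = ENNReal.ofReal s ∧ X 0 - infOn X 0 s > c}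

def nextTd (X : ℝ → ℝ) (c : ℝ) (a : ℝ≥0∞) : ℝ≥0∞ :=
  sInf {u | ∃ s : ℝ, 0 ≤ s ∧ a ≤ ENNReal.ofReal s ∧ u = ENNReal.ofReal s ∧
    supOn X a.toReal s - X s > 2 * c}

def nextTu (X : ℝ → ℝ) (c : ℝ) (a : ℝ≥0∞) : ℝ≥0∞ :=
  sInf {u | ∃ s : ℝ, 0 ≤ s ∧ a ≤ ENNReal.ofReal s ∧ u = ENNReal.ofReal s ∧
    X s - infOn X a.toReal s > 2 * c}

def TuTd (X : ℝ → ℝ) (c : ℝ) : ℕ → ℝ≥0∞ × ℝ≥0∞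
  | 0 => (TuZero X c, nextTd X c (TuZero X c))
  | (n + 1) =>
      let tu := nextTu X c (TuTd X c n).2
      (tu, nextTd X c tu)

def Tu (X : ℝ → ℝ) (c : ℝ) (n : ℕ) : ℝ≥0∞ := (TuTd X c n).1
def Td (X : ℝ → ℝ) (c : ℝ) (n : ℕ) : ℝ≥0∞ := (TuTd X c n).2

open Classical in
/-- The finite variation approximation `X^c` from the paper's construction. -/
def Xc (X : ℝ → ℝ) (c : ℝ) (s : ℝ) : ℝ :=
  if ENNReal.ofReal s < Tu X c 0 then X 0
  else if h : ∃ k, Tu X c k ≤ ENNReal.ofReal s ∧ ENNReal.ofReal s < Td X c k then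
    supOn X (Tu X c (Nat.find h)).toReal s - c
  else if h' : ∃ k, Td X c k ≤ ENNReal.ofReal s ∧ ENNReal.ofReal s < Tu X c (k + 1) then
    infOn X (Td X c (Nat.find h')).toReal s + c
  else 0

/-- Truncated variation at level `c` on `[0, T]`. -/
def TVtrunc (f : ℝ → ℝ) (c T : ℝ) : ℝ≥0∞ :=
  ⨆ (n : ℕ) (t : ℕ → ℝ) (_ : Monotone t) (_ : ∀ i, t i ∈ Icc (0 : ℝ) T),
    ∑ i ∈ Finset.range n, ENNReal.ofReal (|f (t (i + 1)) - f (t i)| - c)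

/-- Upward truncated variation at level `c` on `[0, T]`. -/
def UTVtrunc (f : ℝ → ℝ) (c T : ℝ) : ℝ≥0∞ :=
  ⨆ (n : ℕ) (t : ℕ → ℝ) (_ : Monotone t) (_ : ∀ i, t i ∈ Icc (0 : ℝ) T),
    ∑ i ∈ Finset.range n, ENNReal.ofReal (f (t (i + 1)) - f (t i) - c)

/-- Downward truncated variation at level `c` on `[0, T]`. -/
def DTVtrunc (f : ℝ → ℝ) (c T : ℝ) : ℝ≥0∞ :=
  ⨆ (n : ℕ) (t : ℕ → ℝ) (_ : Monotone t) (_ : ∀ i, t i ∈ Icc (0 : ℝ) T),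
    ∑ i ∈ Finset.range n, ENNReal.ofReal (f (t i) - f (t (i + 1)) - c)

/-- Left-endpoint Riemann–Stieltjes sum of `f` against `g` over the dyadic
partition of `[0, t]` with `2 ^ n` pieces. -/
def RSsum (f g : ℝ → ℝ) (t : ℝ) (n : ℕ) : ℝ :=
  ∑ i ∈ Finset.range (2 ^ n),
    f (t * i / 2 ^ n) * (g (t * (i + 1) / 2 ^ n) - g (t * i / 2 ^ n))

/-- Pathwise Lebesgue–Stieltjes integral `∫_0^t f_- dg`, realized as the limit of
left-endpoint Riemann–Stieltjes sums along dyadic partitions. -/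
def LSint (f g : ℝ → ℝ) (t : ℝ) : ℝ := limUnder atTop (fun n => RSsum f g t n)

/-- Discrete covariation sums along dyadic partitions. -/
def QVsum (f g : ℝ → ℝ) (t : ℝ) (n : ℕ) : ℝ :=
  ∑ i ∈ Finset.range (2 ^ n),
    (f (t * (i + 1) / 2 ^ n) - f (t * i / 2 ^ n)) *
      (g (t * (i + 1) / 2 ^ n) - g (t * i / 2 ^ n))

/-- Sum of products of jumps `∑_{0 < s ≤ t} Δf Δg`. -/
def jumpSum (f g : ℝ → ℝ) (t : ℝ) : ℝ :=
  ∑' s : ℝ, Set.indicator (Ioc (0 : ℝ) t) (fun u => jumpAt f u * jumpAt g u) s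

/-- A local martingale: there is a localizing sequence of stopping times. -/
def IsLocalMartingale {Ω : Type*} [m : MeasurableSpace Ω] (F : Filtration ℝ m)
    (P : Measure Ω) (M : ℝ → Ω → ℝ) : Prop :=
  ∃ τ : ℕ → Ω → ℝ, (∀ n, IsStoppingTime F (fun ω => ((τ n ω : ℝ) : WithTop ℝ))) ∧
    (∀ ω, Tendsto (fun n => τ n ω) atTop atTop) ∧
    ∀ n, Martingale (stoppedProcess M (fun ω => ((τ n ω : ℝ) : WithTop ℝ))) F P

/-- A (càdlàg) semimartingale: adapted, càdlàg, and decomposable as a local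
martingale plus an adapted càdlàg process of locally finite variation. -/
def IsSemimartingale {Ω : Type*} [m : MeasurableSpace Ω] (F : Filtration ℝ m)
    (P : Measure Ω) (X : ℝ → Ω → ℝ) : Prop :=
  Adapted F X ∧ (∀ ω, Cadlag fun t => X t ω) ∧
  ∃ M A : ℝ → Ω → ℝ, (∀ t ω, X t ω = M t ω + A t ω) ∧
    IsLocalMartingale F P M ∧ Adapted F A ∧ (∀ ω, Cadlag fun t => A t ω) ∧
    (∀ ω, ∀ T > (0 : ℝ), eVariationOn (fun t => A t ω) (Icc 0 T) < ⊤)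

/-- The filtration satisfies the usual hypotheses w.r.t. `P`:
right-continuity and completeness. -/
def UsualConditions {Ω : Type*} [m : MeasurableSpace Ω] (F : Filtration ℝ m)
    (P : Measure Ω) : Prop :=
  (∀ t : ℝ, F t = ⨅ (s : ℝ) (_ : t < s), F s) ∧
  (∀ t : ℝ, ∀ s : Set Ω, P s = 0 → MeasurableSet[F t] s)

/-- Uniform convergence on compacts in probability, as `c ↓ 0`. -/
def UCP {Ω : Type*} [m : MeasurableSpace Ω] (P : Measure Ω)
    (Fc : ℝ → ℝ → Ω → ℝ) (G : ℝ → Ω → ℝ) : Prop :=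
  ∀ T > (0 : ℝ), ∀ ε > (0 : ℝ),
    Tendsto (fun c => P {ω | ε ≤ ⨆ t : Icc (0 : ℝ) T, |Fc c t ω - G t ω|})
      (nhdsWithin 0 (Ioi 0)) (nhds 0)

/-- Standard Brownian motion started at `0`. -/
def IsStandardBM {Ω : Type*} [m : MeasurableSpace Ω] (P : Measure Ω)
    (B : ℝ → Ω → ℝ) : Prop :=
  (∀ ω, B 0 ω = 0) ∧ (∀ ω, Continuous fun t => B t ω) ∧
  (∀ t, Measurable (B t)) ∧
  (∀ s t : ℝ, 0 ≤ s → s ≤ t →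
    P.map (fun ω => B t ω - B s ω) = ProbabilityTheory.gaussianReal 0 ((t - s).toNNReal)) ∧
  (∀ n : ℕ, ∀ t : Fin (n + 1) → ℝ, Monotone t → (∀ i, 0 ≤ t i) →
    ProbabilityTheory.iIndepFun
      (fun (i : Fin n) ω => B (t i.succ) ω - B (t i.castSucc) ω) P)

/-- Natural σ-algebra of the process `B` up to time `t`. -/
def naturalSigma {Ω : Type*} (B : ℝ → Ω → ℝ) (t : ℝ) : MeasurableSpace Ω :=
  ⨆ s ∈ Iic t, MeasurableSpace.comap (B s) inferInstance

/-!
Lower bound: the construction keeps `|X - X^c| ≤ c` on `[0, ∞)`, so every increment of `X^c` is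
at least the matching increment of `X` minus `2c`.

Upper bound: `X^c` is monotone on each phase between consecutive switching times, hence the
difference of two nondecreasing functions, its upward and downward variations, whose total
increase bounds `TV(X^c, T)`. That increase is approached by truncated sums along partitions
through near-maximisers of `X` on up phases and near-minimisers on down phases: between consecutive
extremisers `X` moves exactly `2c` more than `X^c`, so only the first step, from `X 0`, loses `c`.
The switching times cannot accumulate because `X` has left limits.
-/

namespace Cadlag

variable {X : ℝ → ℝ}

theorem continuousWithinAt (hX : Cadlag X) (t : ℝ) : ContinuousWithinAt X (Ici t) t := hX.1 t

/-- Each point has a neighbourhood whose two one-sided halves are mapped near `X t` and near the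
left limit; compactness does the rest. -/
theorem isBounded_image (hX : Cadlag X) {K : Set ℝ} (hK : IsCompact K) :
    Bornology.IsBounded (X '' K) := by
  refine hK.induction_on (by simp) (fun s t hst ht => ht.subset (image_mono hst))
    (fun s t hs ht => by rw [image_union]; exact hs.union ht) fun t _ => ?_
  obtain ⟨l, hl⟩ := hX.2 t
  have hright : ∀ᶠ u in 𝓝[≥] t, X u ∈ Metric.ball (X t) 1 :=
    hX.1 t (Metric.ball_mem_nhds _ one_pos)
  have hleft : ∀ᶠ u in 𝓝[<] t, X u ∈ Metric.ball l 1 := hl (Metric.ball_mem_nhds _ one_pos)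
  have hnhds : X ⁻¹' (Metric.ball (X t) 1 ∪ Metric.ball l 1) ∈ 𝓝 t := by
    rw [← nhdsLT_sup_nhdsGE]
    exact ⟨hleft.mono fun u hu => Or.inr hu, hright.mono fun u hu => Or.inl hu⟩
  exact ⟨_, mem_nhdsWithin_of_mem_nhds hnhds,
    (Metric.isBounded_ball.union Metric.isBounded_ball).subset (image_preimage_subset _ _)⟩

theorem bddAbove (hX : Cadlag X) (a b : ℝ) : BddAbove (X '' Icc a b) :=
  (hX.isBounded_image isCompact_Icc).bddAbove

theorem bddBelow (hX : Cadlag X) (a b : ℝ) : BddBelow (X '' Icc a b) :=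
  (hX.isBounded_image isCompact_Icc).bddBelow

end Cadlag

section RunningExtrema

variable {X : ℝ → ℝ} {a b s t u m : ℝ}

theorem infOn_eq_neg_supOn_neg : infOn X a b = -supOn (fun s => -X s) a b := by
  rw [infOn, supOn, Real.sInf_def, ← image_neg_eq_neg, image_image]

theorem le_supOn (h : BddAbove (X '' Icc a b)) (hu : u ∈ Icc a b) : X u ≤ supOn X a b :=
  le_csSup h ⟨u, hu, rfl⟩

theorem infOn_le (h : BddBelow (X '' Icc a b)) (hu : u ∈ Icc a b) : infOn X a b ≤ X u :=
  csInf_le h ⟨u, hu, rfl⟩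

theorem supOn_self (a : ℝ) : supOn X a a = X a := by simp [supOn]

theorem infOn_self (a : ℝ) : infOn X a a = X a := by simp [infOn]

theorem supOn_mono (h : BddAbove (X '' Icc a t)) (has : a ≤ s) (hst : s ≤ t) :
    supOn X a s ≤ supOn X a t :=
  csSup_le_csSup h ⟨X a, a, ⟨le_rfl, has⟩, rfl⟩ (image_mono (Icc_subset_Icc le_rfl hst))

theorem infOn_anti (h : BddBelow (X '' Icc a t)) (has : a ≤ s) (hst : s ≤ t) :
    infOn X a t ≤ infOn X a s :=
  csInf_le_csInf h ⟨X a, a, ⟨le_rfl, has⟩, rfl⟩ (image_mono (Icc_subset_Icc le_rfl hst))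

theorem exists_lt_of_lt_supOn (hab : a ≤ b) (h : m < supOn X a b) : ∃ u ∈ Icc a b, m < X u := by
  obtain ⟨_, ⟨u, hu, rfl⟩, hmu⟩ :=
    exists_lt_of_lt_csSup (⟨X a, a, ⟨le_rfl, hab⟩, rfl⟩ : (X '' Icc a b).Nonempty) h
  exact ⟨u, hu, hmu⟩

theorem exists_lt_of_infOn_lt (hab : a ≤ b) (h : infOn X a b < m) : ∃ u ∈ Icc a b, X u < m := by
  obtain ⟨_, ⟨u, hu, rfl⟩, hmu⟩ :=
    exists_lt_of_csInf_lt (⟨X a, a, ⟨le_rfl, hab⟩, rfl⟩ : (X '' Icc a b).Nonempty) h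
  exact ⟨u, hu, hmu⟩

theorem continuousWithinAt_supOn (hb : ∀ b, BddAbove (X '' Icc a b))
    (hX : ContinuousWithinAt X (Ici t) t) (hat : a ≤ t) :
    ContinuousWithinAt (supOn X a) (Ici t) t := by
  rw [Metric.continuousWithinAt_iff] at hX ⊢
  intro ε hε
  obtain ⟨δ, hδ, hclose⟩ := hX (ε / 2) (half_pos hε)
  refine ⟨δ, hδ, fun s (hts : t ≤ s) hst => ?_⟩
  have hXt : X t ≤ supOn X a t := le_supOn (hb t) ⟨hat, le_rfl⟩
  have hle : supOn X a s ≤ supOn X a t + ε / 2 := by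
    refine csSup_le ⟨X a, a, ⟨le_rfl, hat.trans hts⟩, rfl⟩ ?_
    rintro _ ⟨u, hu, rfl⟩
    rcases le_total u t with hut | htu
    · linarith [le_supOn (hb t) ⟨hu.1, hut⟩]
    · have hu' : dist u t < δ := by
        rw [Real.dist_eq, abs_of_nonneg (by linarith)] at hst ⊢; linarith [hu.2]
      linarith [abs_lt.mp (Real.dist_eq _ _ ▸ hclose htu hu')]
  have hge := supOn_mono (hb s) hat hts
  rw [Real.dist_eq, abs_lt]
  constructor <;> linarith

theorem continuousWithinAt_infOn (hb : ∀ b, BddBelow (X '' Icc a b))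
    (hX : ContinuousWithinAt X (Ici t) t) (hat : a ≤ t) :
    ContinuousWithinAt (infOn X a) (Ici t) t := by
  have hb' : ∀ b, BddAbove ((fun s => -X s) '' Icc a b) := fun b => by
    rw [← image_image, image_neg_eq_neg]; exact (hb b).neg
  rw [show infOn X a = fun s => -supOn (fun s => -X s) a s from
    funext fun _ => infOn_eq_neg_supOn_neg]
  exact (continuousWithinAt_supOn hb' hX.neg hat).neg

end RunningExtrema

/-- The first time `s ≥ a` at which `D s` exceeds the level `θ` (`⊤` if there is none); all the
stopping times of the construction are of this form. -/
def hitAfter (a : ℝ≥0∞) (D : ℝ → ℝ) (θ : ℝ) : ℝ≥0∞ :=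
  sInf {u | ∃ s : ℝ, 0 ≤ s ∧ a ≤ ENNReal.ofReal s ∧ u = ENNReal.ofReal s ∧ D s > θ}

section HitAfter

variable {a : ℝ≥0∞} {D : ℝ → ℝ} {θ s t : ℝ}

theorem hitAfter_le (hs : 0 ≤ s) (has : a ≤ ENNReal.ofReal s) (h : θ < D s) :
    hitAfter a D θ ≤ ENNReal.ofReal s :=
  sInf_le ⟨s, hs, has, rfl, h⟩

theorem le_hitAfter : a ≤ hitAfter a D θ :=
  le_sInf fun _ ⟨_, _, has, hu, _⟩ => hu ▸ has

theorem le_of_lt_hitAfter (hs : 0 ≤ s) (has : a ≤ ENNReal.ofReal s)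
    (h : ENNReal.ofReal s < hitAfter a D θ) : D s ≤ θ :=
  not_lt.mp fun hθ => (hitAfter_le hs has hθ).not_gt h

theorem ofReal_lt_hitAfter (ht : 0 ≤ t)
    (hbefore : ∀ s, 0 ≤ s → a ≤ ENNReal.ofReal s → θ < D s → t ≤ s) (hDt : D t < θ)
    (hD : UpperSemicontinuousWithinAt D (Ici t) t) : ENNReal.ofReal t < hitAfter a D θ := by
  obtain ⟨t', htt', hIco⟩ := mem_nhdsGE_iff_exists_Ico_subset.mp (hD θ hDt)
  refine ((ENNReal.ofReal_lt_ofReal_iff_of_nonneg ht).mpr htt').trans_le (le_sInf ?_)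
  rintro _ ⟨s, hs, has, rfl, hθ⟩
  refine ENNReal.ofReal_le_ofReal (not_lt.mp fun hst => ?_)
  exact (hIco ⟨hbefore s hs has hθ, hst⟩ : D s < θ).not_gt hθ

theorem lt_hitAfter (ha : a ≠ ⊤) (hDa : D a.toReal < θ)
    (hD : UpperSemicontinuousWithinAt D (Ici a.toReal) a.toReal) : a < hitAfter a D θ := by
  have h := ofReal_lt_hitAfter ENNReal.toReal_nonneg
    (fun s hs has _ => ENNReal.toReal_le_of_le_ofReal hs has) hDa hD
  rwa [ENNReal.ofReal_toReal ha] at h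

theorem le_apply_hitAfter (hfin : hitAfter a D θ ≠ ⊤)
    (hD : UpperSemicontinuousWithinAt D (Ici (hitAfter a D θ).toReal)
      (hitAfter a D θ).toReal) : θ ≤ D (hitAfter a D θ).toReal := by
  refine not_lt.mp fun hlt => ?_
  have h := ofReal_lt_hitAfter ENNReal.toReal_nonneg
    (fun s hs has hθ => ENNReal.toReal_le_of_le_ofReal hs (hitAfter_le hs has hθ)) hlt hD
  rw [ENNReal.ofReal_toReal hfin] at h
  exact h.false

end HitAfter

section SwitchingTimes

variable {X : ℝ → ℝ} {c : ℝ} {a : ℝ≥0∞} {k : ℕ} {s : ℝ}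

theorem Cadlag.upperSemicontinuousWithinAt_supOn_sub (hX : Cadlag X) {a t : ℝ} (hat : a ≤ t) :
    UpperSemicontinuousWithinAt (fun s => supOn X a s - X s) (Ici t) t :=
  ((continuousWithinAt_supOn (hX.bddAbove a) (hX.continuousWithinAt t) hat).sub
    (hX.continuousWithinAt t)).upperSemicontinuousWithinAt

theorem Cadlag.upperSemicontinuousWithinAt_sub_infOn (hX : Cadlag X) {a t : ℝ} (hat : a ≤ t) :
    UpperSemicontinuousWithinAt (fun s => X s - infOn X a s) (Ici t) t :=
  ((hX.continuousWithinAt t).sub (continuousWithinAt_infOn (hX.bddBelow a)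
    (hX.continuousWithinAt t) hat)).upperSemicontinuousWithinAt

theorem Cadlag.upperSemicontinuousWithinAt_sub_const (hX : Cadlag X) (x t : ℝ) :
    UpperSemicontinuousWithinAt (fun s => X s - x) (Ici t) t :=
  ((hX.continuousWithinAt t).sub continuousWithinAt_const).upperSemicontinuousWithinAt

theorem nextTd_eq_hitAfter :
    nextTd X c a = hitAfter a (fun s => supOn X a.toReal s - X s) (2 * c) := rfl

theorem nextTu_eq_hitAfter :
    nextTu X c a = hitAfter a (fun s => X s - infOn X a.toReal s) (2 * c) := rfl

/-- Since `X` is bounded on compacts, `sup_{[0, s]} X` exceeds `X 0 + c` exactly from the first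
time `X` itself does. -/
theorem Cadlag.TuZero_eq_hitAfter (hX : Cadlag X) :
    TuZero X c = hitAfter 0 (fun s => X s - X 0) c := by
  apply le_antisymm
  · refine le_sInf ?_
    rintro _ ⟨s, hs, -, rfl, hcs⟩
    exact sInf_le ⟨s, hs, rfl, hcs.trans_le (by linarith [le_supOn (hX.bddAbove 0 s) ⟨hs, le_rfl⟩])⟩
  · refine le_sInf ?_
    rintro _ ⟨s, hs, rfl, hcs⟩
    obtain ⟨u, hu, hXu⟩ :=
      exists_lt_of_lt_supOn (X := X) hs (show X 0 + c < supOn X 0 s by linarith)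
    exact (hitAfter_le hu.1 zero_le (by linarith)).trans (ENNReal.ofReal_le_ofReal hu.2)

theorem Td_eq_nextTd : Td X c k = nextTd X c (Tu X c k) := by cases k <;> rfl

theorem Tu_succ_eq_nextTu : Tu X c (k + 1) = nextTu X c (Td X c k) := rfl

theorem Tu_le_Td : Tu X c k ≤ Td X c k := Td_eq_nextTd ▸ le_hitAfter

theorem Td_le_Tu_succ : Td X c k ≤ Tu X c (k + 1) := le_hitAfter

theorem Cadlag.Tu_lt_Td (hX : Cadlag X) (hc : 0 < c) (hfin : Tu X c k ≠ ⊤) :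
    Tu X c k < Td X c k := by
  rw [Td_eq_nextTd, nextTd_eq_hitAfter]
  exact lt_hitAfter hfin (by simp [supOn_self, hc])
    (hX.upperSemicontinuousWithinAt_supOn_sub le_rfl)

theorem Cadlag.Td_lt_Tu_succ (hX : Cadlag X) (hc : 0 < c) (hfin : Td X c k ≠ ⊤) :
    Td X c k < Tu X c (k + 1) := by
  rw [Tu_succ_eq_nextTu, nextTu_eq_hitAfter]
  exact lt_hitAfter hfin (by simp [infOn_self, hc])
    (hX.upperSemicontinuousWithinAt_sub_infOn le_rfl)

theorem Cadlag.Tu_zero_pos (hX : Cadlag X) (hc : 0 < c) : 0 < Tu X c 0 := by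
  show 0 < TuZero X c
  rw [hX.TuZero_eq_hitAfter]
  exact lt_hitAfter ENNReal.zero_ne_top (by simpa using hc)
    (hX.upperSemicontinuousWithinAt_sub_const (X 0) _)

/-- The real time `T_u^k` (junk `0` if `T_u^k = ∞`). -/
def upTime (X : ℝ → ℝ) (c : ℝ) (k : ℕ) : ℝ := (Tu X c k).toReal

/-- The real time `T_d^k` (junk `0` if `T_d^k = ∞`). -/
def downTime (X : ℝ → ℝ) (c : ℝ) (k : ℕ) : ℝ := (Td X c k).toReal

theorem Cadlag.le_sub_X_zero_upTime_zero (hX : Cadlag X) (hfin : Tu X c 0 ≠ ⊤) :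
    c ≤ X (upTime X c 0) - X 0 := by
  have hfin' : TuZero X c ≠ ⊤ := hfin
  rw [hX.TuZero_eq_hitAfter] at hfin'
  have h := le_apply_hitAfter hfin' (hX.upperSemicontinuousWithinAt_sub_const (X 0) _)
  rwa [← hX.TuZero_eq_hitAfter] at h

def peak (X : ℝ → ℝ) (c : ℝ) (k : ℕ) : ℝ := supOn X (upTime X c k) (downTime X c k)

def trough (X : ℝ → ℝ) (c : ℝ) (k : ℕ) : ℝ := infOn X (downTime X c k) (upTime X c (k + 1))

theorem Cadlag.two_mul_le_peak_sub (hX : Cadlag X) (hfin : Td X c k ≠ ⊤) :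
    2 * c ≤ peak X c k - X (downTime X c k) := by
  rw [Td_eq_nextTd] at hfin
  have h := le_apply_hitAfter hfin (hX.upperSemicontinuousWithinAt_supOn_sub
    (ENNReal.toReal_mono hfin le_hitAfter))
  rwa [← nextTd_eq_hitAfter, ← Td_eq_nextTd] at h

theorem Cadlag.two_mul_le_sub_trough (hX : Cadlag X) (hfin : Tu X c (k + 1) ≠ ⊤) :
    2 * c ≤ X (upTime X c (k + 1)) - trough X c k :=
  le_apply_hitAfter hfin (hX.upperSemicontinuousWithinAt_sub_infOn
    (ENNReal.toReal_mono hfin le_hitAfter))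

theorem Cadlag.sub_X_zero_le_of_lt_Tu_zero (hX : Cadlag X) (hs : 0 ≤ s)
    (h : ENNReal.ofReal s < Tu X c 0) : X s - X 0 ≤ c := by
  have h' : ENNReal.ofReal s < TuZero X c := h
  rw [hX.TuZero_eq_hitAfter] at h'
  exact le_of_lt_hitAfter (D := fun s => X s - X 0) hs zero_le h'

theorem Cadlag.X_zero_sub_le_of_lt_TdIni (hX : Cadlag X) (hs : 0 ≤ s)
    (h : ENNReal.ofReal s < TdIni X c) : X 0 - X s ≤ c :=
  not_lt.mp fun hcs => (sInf_le ⟨s, hs, rfl,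
    hcs.trans_le (by linarith [infOn_le (hX.bddBelow 0 s) ⟨hs, le_rfl⟩])⟩ : TdIni X c ≤ _).not_gt h

theorem supOn_sub_le_of_lt_Td (hs : 0 ≤ s) (h₁ : Tu X c k ≤ ENNReal.ofReal s)
    (h₂ : ENNReal.ofReal s < Td X c k) : supOn X (upTime X c k) s - X s ≤ 2 * c :=
  le_of_lt_hitAfter (D := fun s => supOn X (upTime X c k) s - X s) hs h₁
    (by rwa [Td_eq_nextTd] at h₂)

theorem sub_infOn_le_of_lt_Tu_succ (hs : 0 ≤ s) (h₁ : Td X c k ≤ ENNReal.ofReal s)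
    (h₂ : ENNReal.ofReal s < Tu X c (k + 1)) : X s - infOn X (downTime X c k) s ≤ 2 * c :=
  le_of_lt_hitAfter (D := fun s => X s - infOn X (downTime X c k) s) hs h₁ h₂

end SwitchingTimes

section Phases

theorem exists_phase {α : Type*} [LinearOrder α] {τ : ℕ → α} {x : α} (h₀ : τ 0 ≤ x)
    (h : ∃ j, x < τ j) : ∃ j, τ j ≤ x ∧ x < τ (j + 1) := by
  classical
  obtain ⟨j, hj⟩ : ∃ j, Nat.find h = j + 1 :=
    Nat.exists_eq_add_one.mpr (Nat.pos_of_ne_zero fun h0 => (h0 ▸ Nat.find_spec h).not_ge h₀)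
  exact ⟨j, not_lt.mp (Nat.find_min h (by omega)), hj ▸ Nat.find_spec h⟩

theorem Monotone.phase_le_phase {α : Type*} [Preorder α] {τ : ℕ → α} (hτ : Monotone τ)
    {x y : α} {j j' : ℕ} (hj : τ j ≤ x) (hj' : y < τ (j' + 1)) (hxy : x ≤ y) : j ≤ j' :=
  not_lt.mp fun hlt => (hτ hlt).not_gt (hj'.trans_le' (hxy.trans' hj)) |>.elim

theorem Monotone.phase_unique {α : Type*} [Preorder α] {τ : ℕ → α} (hτ : Monotone τ)
    {x : α} {j j' : ℕ} (h : τ j ≤ x ∧ x < τ (j + 1)) (h' : τ j' ≤ x ∧ x < τ (j' + 1)) :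
    j = j' :=
  le_antisymm (hτ.phase_le_phase h.1 h'.2 le_rfl) (hτ.phase_le_phase h'.1 h.2 le_rfl)

@[elab_as_elim]
theorem phase_cases {P : ℕ → Prop} (j : ℕ) (zero : P 0) (up : ∀ k, P (2 * k + 1))
    (down : ∀ k, P (2 * k + 2)) : P j := by
  obtain ⟨k, rfl | rfl⟩ := Nat.even_or_odd' j
  · cases k with
    | zero => exact zero
    | succ k => exact down k
  · exact up k

variable {X : ℝ → ℝ} {c : ℝ} {k : ℕ} {s : ℝ}

/-- `0, T_u^0, T_d^0, T_u^1, T_d^1, …`: phase `0` is `[0, T_u^0)`, phase `2k+1` is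
`[T_u^k, T_d^k)` and phase `2k+2` is `[T_d^k, T_u^{k+1})`. -/
def switchTime (X : ℝ → ℝ) (c : ℝ) : ℕ → ℝ≥0∞
  | 0 => 0
  | j + 1 => if j % 2 = 0 then Tu X c (j / 2) else Td X c (j / 2)

@[simp] theorem switchTime_zero : switchTime X c 0 = 0 := rfl

@[simp] theorem switchTime_one : switchTime X c 1 = Tu X c 0 := rfl

@[simp] theorem switchTime_odd (k : ℕ) : switchTime X c (2 * k + 1) = Tu X c k := by
  simp [switchTime]

@[simp] theorem switchTime_even (k : ℕ) : switchTime X c (2 * k + 2) = Td X c k := by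
  simp only [switchTime, show (2 * k + 1) % 2 = 1 by omega, show (2 * k + 1) / 2 = k by omega]
  rfl

theorem monotone_switchTime : Monotone (switchTime X c) := by
  refine monotone_nat_of_le_succ fun j => ?_
  induction j using phase_cases with
  | zero => simp
  | up k => simpa using Tu_le_Td
  | down k => simpa [show 2 * k + 2 + 1 = 2 * (k + 1) + 1 by ring] using Td_le_Tu_succ

def InPhase (X : ℝ → ℝ) (c : ℝ) (x : ℝ≥0∞) (j : ℕ) : Prop :=
  switchTime X c j ≤ x ∧ x < switchTime X c (j + 1)

@[simp] theorem inPhase_zero_iff {x : ℝ≥0∞} : InPhase X c x 0 ↔ x < Tu X c 0 := by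
  simp [InPhase]

@[simp] theorem inPhase_up_iff {x : ℝ≥0∞} :
    InPhase X c x (2 * k + 1) ↔ Tu X c k ≤ x ∧ x < Td X c k := by
  simp [InPhase]

@[simp] theorem inPhase_down_iff {x : ℝ≥0∞} :
    InPhase X c x (2 * k + 2) ↔ Td X c k ≤ x ∧ x < Tu X c (k + 1) := by
  simp [InPhase, show 2 * k + 2 + 1 = 2 * (k + 1) + 1 by ring]

theorem InPhase.unique {x : ℝ≥0∞} {j j' : ℕ} (h : InPhase X c x j) (h' : InPhase X c x j') :
    j = j' :=
  monotone_switchTime.phase_unique h h'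

theorem monotone_Tu : Monotone (Tu X c) := fun k k' h => by
  simpa using monotone_switchTime (X := X) (c := c) (show 2 * k + 1 ≤ 2 * k' + 1 by omega)

/-- Near a finite limit `L` of the `T_u^k`, the left limit of `X` at `L` forbids the
oscillations of size `2c` that `X` performs between `T_u^k` and `T_d^k`. -/
theorem Cadlag.exists_lt_Tu (hX : Cadlag X) (hc : 0 < c) (M : ℝ) :
    ∃ k, ENNReal.ofReal M < Tu X c k := by
  by_contra! hM
  have hTu : ∀ k, Tu X c k ≠ ⊤ := fun k => ne_top_of_le_ne_top ENNReal.ofReal_ne_top (hM k)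
  have hTd : ∀ k, Td X c k ≠ ⊤ := fun k => ne_top_of_le_ne_top (hTu (k + 1)) Td_le_Tu_succ
  have hAB : ∀ k, upTime X c k ≤ downTime X c k := fun k => ENNReal.toReal_mono (hTd k) Tu_le_Td
  have hBA : ∀ k, downTime X c k < upTime X c (k + 1) := fun k =>
    (ENNReal.toReal_lt_toReal (hTd k) (hTu (k + 1))).mpr (hX.Td_lt_Tu_succ hc (hTd k))
  have hbdd : BddAbove (range (upTime X c)) :=
    ⟨_, forall_mem_range.mpr fun k => ENNReal.toReal_mono ENNReal.ofReal_ne_top (hM k)⟩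
  set L := ⨆ k, upTime X c k
  obtain ⟨l, hl⟩ := hX.2 L
  obtain ⟨δ, hδ, hnear⟩ := Metric.tendsto_nhdsWithin_nhds.mp hl (c / 2) (half_pos hc)
  have hclose : ∀ u, L - δ < u → u < L → |X u - l| < c / 2 := fun u h₁ h₂ => by
    rw [← Real.dist_eq]
    exact hnear h₂ (by rw [Real.dist_eq, abs_of_neg (by linarith)]; linarith)
  obtain ⟨k, hk⟩ := exists_lt_of_lt_ciSup (show L - δ < L by linarith)
  have hBL : downTime X c k < L := (hBA k).trans_le (le_ciSup hbdd (k + 1))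
  obtain ⟨p, hp, hXp⟩ := exists_lt_of_lt_supOn (hAB k)
    (show X (downTime X c k) + c < peak X c k by linarith [hX.two_mul_le_peak_sub (hTd k)])
  have h₁ := hclose p (by linarith [hp.1]) (hp.2.trans_lt hBL)
  have h₂ := hclose _ (by linarith [hAB k]) hBL
  linarith [abs_lt.mp h₁, abs_lt.mp h₂]

theorem Cadlag.exists_inPhase (hX : Cadlag X) (hc : 0 < c) (s : ℝ) :
    ∃ j, InPhase X c (ENNReal.ofReal s) j :=
  exists_phase (by simp) <|
    let ⟨k, hk⟩ := hX.exists_lt_Tu hc s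
    ⟨2 * k + 1, by simpa using hk⟩

end Phases

section ByPhase

variable {X : ℝ → ℝ} {c : ℝ} {k : ℕ} {s : ℝ} {f₀ : ℝ} {fUp fDown : ℕ → ℝ → ℝ}

open Classical in
/-- `Xc` with its three pieces abstracted, so that `Xc_eq_byPhase` holds by `rfl`. -/
def byPhase (X : ℝ → ℝ) (c : ℝ) (f₀ : ℝ) (fUp fDown : ℕ → ℝ → ℝ) (s : ℝ) : ℝ :=
  if ENNReal.ofReal s < Tu X c 0 then f₀
  else if h : ∃ k, Tu X c k ≤ ENNReal.ofReal s ∧ ENNReal.ofReal s < Td X c k then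
    fUp (Nat.find h) s
  else if h' : ∃ k, Td X c k ≤ ENNReal.ofReal s ∧ ENNReal.ofReal s < Tu X c (k + 1) then
    fDown (Nat.find h') s
  else 0

theorem Xc_eq_byPhase : Xc X c = byPhase X c (X 0)
    (fun k s => supOn X (upTime X c k) s - c) (fun k s => infOn X (downTime X c k) s + c) :=
  rfl

theorem byPhase_sub {g₀ : ℝ} {gUp gDown : ℕ → ℝ → ℝ} :
    byPhase X c f₀ fUp fDown s - byPhase X c g₀ gUp gDown s =
      byPhase X c (f₀ - g₀) (fun k s => fUp k s - gUp k s)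
        (fun k s => fDown k s - gDown k s) s := by
  unfold byPhase
  split_ifs <;> simp

theorem byPhase_of_inPhase_zero (h : InPhase X c (ENNReal.ofReal s) 0) :
    byPhase X c f₀ fUp fDown s = f₀ :=
  if_pos (inPhase_zero_iff.mp h)

theorem byPhase_of_inPhase_up (h : InPhase X c (ENNReal.ofReal s) (2 * k + 1)) :
    byPhase X c f₀ fUp fDown s = fUp k s := by
  obtain ⟨h₁, h₂⟩ := inPhase_up_iff.mp h
  have hup : ∃ k, Tu X c k ≤ ENNReal.ofReal s ∧ ENNReal.ofReal s < Td X c k := ⟨k, h₁, h₂⟩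
  rw [byPhase, if_neg (not_lt.mpr ((monotone_Tu (Nat.zero_le k)).trans h₁)), dif_pos hup]
  obtain rfl : Nat.find hup = k := by
    have := (inPhase_up_iff.mpr (Nat.find_spec hup)).unique h
    omega
  rfl

theorem byPhase_of_inPhase_down (h : InPhase X c (ENNReal.ofReal s) (2 * k + 2)) :
    byPhase X c f₀ fUp fDown s = fDown k s := by
  obtain ⟨h₁, h₂⟩ := inPhase_down_iff.mp h
  have hdown : ∃ k, Td X c k ≤ ENNReal.ofReal s ∧ ENNReal.ofReal s < Tu X c (k + 1) :=
    ⟨k, h₁, h₂⟩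
  have hnup : ¬∃ k, Tu X c k ≤ ENNReal.ofReal s ∧ ENNReal.ofReal s < Td X c k :=
    fun ⟨k', hk'⟩ => by have := (inPhase_up_iff.mpr hk').unique h; omega
  rw [byPhase, if_neg (not_lt.mpr (((monotone_Tu (Nat.zero_le k)).trans Tu_le_Td).trans h₁)),
    dif_neg hnup, dif_pos hdown]
  obtain rfl : Nat.find hdown = k := by
    have := (inPhase_down_iff.mpr (Nat.find_spec hdown)).unique h
    omega
  rfl

/-- Before `T_u^0 ≤ T_d^{ini}` the path stays in `[X 0 - c, X 0 + c]`; afterwards `X^c` is the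
running extremum of the current phase shifted by `c` towards `X`. -/
theorem Cadlag.abs_sub_Xc_le (hX : Cadlag X) (hc : 0 < c) (hud : Tu X c 0 ≤ TdIni X c) {s : ℝ}
    (hs : 0 ≤ s) : |X s - Xc X c s| ≤ c := by
  obtain ⟨j, hj⟩ := hX.exists_inPhase hc s
  rw [Xc_eq_byPhase, abs_le]
  induction j using phase_cases with
  | zero =>
    have h := inPhase_zero_iff.mp hj
    rw [byPhase_of_inPhase_zero hj]
    have h₁ := hX.sub_X_zero_le_of_lt_Tu_zero hs h
    have h₂ := hX.X_zero_sub_le_of_lt_TdIni hs (h.trans_le hud)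
    constructor <;> linarith
  | up k =>
    obtain ⟨h₁, h₂⟩ := inPhase_up_iff.mp hj
    rw [byPhase_of_inPhase_up hj]
    have h₃ := le_supOn (hX.bddAbove (upTime X c k) s)
      ⟨ENNReal.toReal_le_of_le_ofReal hs h₁, le_rfl⟩
    have h₄ := supOn_sub_le_of_lt_Td hs h₁ h₂
    constructor <;> linarith
  | down k =>
    obtain ⟨h₁, h₂⟩ := inPhase_down_iff.mp hj
    rw [byPhase_of_inPhase_down hj]
    have h₃ := infOn_le (hX.bddBelow (downTime X c k) s)
      ⟨ENNReal.toReal_le_of_le_ofReal hs h₁, le_rfl⟩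
    have h₄ := sub_infOn_le_of_lt_Tu_succ hs h₁ h₂
    constructor <;> linarith

end ByPhase

theorem TVtrunc_le_eVariationOn_of_abs_sub_le {f g : ℝ → ℝ} {c T : ℝ}
    (h : ∀ s ∈ Icc 0 T, |f s - g s| ≤ c) : TVtrunc f (2 * c) T ≤ eVariationOn g (Icc 0 T) := by
  refine iSup_le fun n => iSup_le fun t => iSup_le fun ht => iSup_le fun htT => ?_
  refine (Finset.sum_le_sum fun i _ => ?_).trans (eVariationOn.sum_le ht htT)
  rw [edist_dist, Real.dist_eq]
  refine ENNReal.ofReal_le_ofReal ?_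
  obtain ⟨h₁, h₂⟩ := abs_le.mp (h _ (htT (i + 1)))
  obtain ⟨h₃, h₄⟩ := abs_le.mp (h _ (htT i))
  rw [sub_le_iff_le_add, abs_le]
  constructor <;> linarith [le_abs_self (g (t (i + 1)) - g (t i)),
    neg_abs_le (g (t (i + 1)) - g (t i))]

theorem eVariationOn_sub_le {α E : Type*} [LinearOrder α] [SeminormedAddCommGroup E]
    (f g : α → E) (s : Set α) : eVariationOn (f - g) s ≤ eVariationOn f s + eVariationOn g s := by
  refine iSup_le fun ⟨n, u, hu, us⟩ => ?_
  calc ∑ i ∈ Finset.range n, edist ((f - g) (u (i + 1))) ((f - g) (u i))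
      ≤ ∑ i ∈ Finset.range n,
          (edist (f (u (i + 1))) (f (u i)) + edist (g (u (i + 1))) (g (u i))) :=
        Finset.sum_le_sum fun i _ => by
          simpa only [Pi.sub_apply, sub_eq_add_neg, edist_neg_neg] using
            edist_add_add_le (f (u (i + 1))) (-g (u (i + 1))) (f (u i)) (-g (u i))
    _ = _ := Finset.sum_add_distrib
    _ ≤ _ := add_le_add (eVariationOn.sum_le hu us) (eVariationOn.sum_le hu us)

theorem MonotoneOn.eVariationOn_sub_le {f g : ℝ → ℝ} {a b : ℝ} (hf : MonotoneOn f (Icc a b))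
    (hg : MonotoneOn g (Icc a b)) (hab : a ≤ b) :
    eVariationOn (f - g) (Icc a b) ≤ ENNReal.ofReal (f b - f a) + ENNReal.ofReal (g b - g a) := by
  have ha := left_mem_Icc.mpr hab
  have hb := right_mem_Icc.mpr hab
  have hf' := hf.eVariationOn_eq ha hb
  have hg' := hg.eVariationOn_eq ha hb
  rw [inter_self] at hf' hg'
  exact hf' ▸ hg' ▸ _root_.eVariationOn_sub_le f g _

theorem monotoneOn_of_phases {τ : ℕ → ℝ≥0∞} (hτ : Monotone τ) {φ : ℝ → ℝ}
    (hcover : ∀ s, ∃ j, τ j ≤ ENNReal.ofReal s ∧ ENNReal.ofReal s < τ (j + 1))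
    (hwithin : ∀ j s t, 0 ≤ s → s ≤ t → τ j ≤ ENNReal.ofReal s →
      ENNReal.ofReal t < τ (j + 1) → φ s ≤ φ t)
    (hnext : ∀ j s, 0 ≤ s → τ j ≤ ENNReal.ofReal s → ENNReal.ofReal s < τ (j + 1) →
      τ (j + 1) ≠ ⊤ → φ s ≤ φ (τ (j + 1)).toReal) :
    MonotoneOn φ (Ici 0) := by
  intro s hs t ht hst
  obtain ⟨j', hj'⟩ := hcover t
  obtain ⟨j, hj⟩ := hcover s
  induction h : j' - j using Nat.strong_induction_on generalizing j s with | _ n ih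
  rcases (hτ.phase_le_phase hj.1 hj'.2 (ENNReal.ofReal_le_ofReal hst)).eq_or_lt with rfl | hjj
  · exact hwithin j s t hs hst hj.1 hj'.2
  have hnext_le : τ (j + 1) ≤ ENNReal.ofReal t := (hτ hjj).trans hj'.1
  have hfin : τ (j + 1) ≠ ⊤ := ne_top_of_le_ne_top ENNReal.ofReal_ne_top hnext_le
  set r := (τ (j + 1)).toReal
  have hr : ENNReal.ofReal r = τ (j + 1) := ENNReal.ofReal_toReal hfin
  have hr0 : 0 ≤ r := ENNReal.toReal_nonneg
  obtain ⟨j'', hj''⟩ := hcover r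
  have hjj'' : j + 1 ≤ j'' := hτ.phase_le_phase hr.ge hj''.2 le_rfl
  calc φ s ≤ φ r := hnext j s hs hj.1 hj.2 hfin
    _ ≤ φ t := ih _ (by omega) hr0 (ENNReal.toReal_le_of_le_ofReal ht hnext_le) j'' hj'' rfl

section Decomposition

variable {X : ℝ → ℝ} {c : ℝ} {k : ℕ} {s T : ℝ}

/-- `upLevel X c k + X (T_u^k)` is the upward variation of `X^c` on `[0, T_u^k]`: `X^c` rises by
`peak - X (T_u^k)` during an up phase and jumps by `X (T_u^{k+1}) - trough - 2c` at `T_u^{k+1}`. -/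
def upLevel (X : ℝ → ℝ) (c : ℝ) : ℕ → ℝ
  | 0 => -X 0 - c
  | k + 1 => upLevel X c k + peak X c k - trough X c k - 2 * c

/-- The upward variation of `X^c` on `[0, s]`. -/
def upPart (X : ℝ → ℝ) (c : ℝ) : ℝ → ℝ :=
  byPhase X c 0 (fun k s => upLevel X c k + supOn X (upTime X c k) s)
    (fun k _ => upLevel X c k + peak X c k)

/-- The downward variation of `X^c` on `[0, s]`, shifted by `-X 0`. -/
def downPart (X : ℝ → ℝ) (c : ℝ) : ℝ → ℝ :=
  byPhase X c (-X 0) (fun k _ => upLevel X c k + c)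
    (fun k s => upLevel X c k + peak X c k - infOn X (downTime X c k) s - c)

theorem Xc_eq_upPart_sub_downPart : Xc X c = upPart X c - downPart X c := by
  funext s
  rw [Pi.sub_apply, upPart, downPart, byPhase_sub, Xc_eq_byPhase]
  congr 1
  · ring
  all_goals funext k s; ring

theorem Cadlag.inPhase_upTime (hX : Cadlag X) (hc : 0 < c) (hfin : Tu X c k ≠ ⊤) :
    InPhase X c (ENNReal.ofReal (upTime X c k)) (2 * k + 1) := by
  rw [inPhase_up_iff, upTime, ENNReal.ofReal_toReal hfin]
  exact ⟨le_rfl, hX.Tu_lt_Td hc hfin⟩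

theorem Cadlag.inPhase_downTime (hX : Cadlag X) (hc : 0 < c) (hfin : Td X c k ≠ ⊤) :
    InPhase X c (ENNReal.ofReal (downTime X c k)) (2 * k + 2) := by
  rw [inPhase_down_iff, downTime, ENNReal.ofReal_toReal hfin]
  exact ⟨le_rfl, hX.Td_lt_Tu_succ hc hfin⟩

theorem Cadlag.monotoneOn_of_inPhase (hX : Cadlag X) (hc : 0 < c) {φ : ℝ → ℝ}
    (hwithin : ∀ j s t, 0 ≤ s → s ≤ t → InPhase X c (ENNReal.ofReal s) j →
      InPhase X c (ENNReal.ofReal t) j → φ s ≤ φ t)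
    (hzero : ∀ s, 0 ≤ s → InPhase X c (ENNReal.ofReal s) 0 → Tu X c 0 ≠ ⊤ →
      φ s ≤ φ (upTime X c 0))
    (hup : ∀ k s, 0 ≤ s → InPhase X c (ENNReal.ofReal s) (2 * k + 1) → Td X c k ≠ ⊤ →
      φ s ≤ φ (downTime X c k))
    (hdown : ∀ k s, 0 ≤ s → InPhase X c (ENNReal.ofReal s) (2 * k + 2) → Tu X c (k + 1) ≠ ⊤ →
      φ s ≤ φ (upTime X c (k + 1))) :
    MonotoneOn φ (Ici 0) := by
  refine monotoneOn_of_phases monotone_switchTime (hX.exists_inPhase hc)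
    (fun j s t hs hst h₁ h₂ => hwithin j s t hs hst
      ⟨h₁, (ENNReal.ofReal_le_ofReal hst).trans_lt h₂⟩
      ⟨h₁.trans (ENNReal.ofReal_le_ofReal hst), h₂⟩) fun j s hs h₁ h₂ hfin => ?_
  induction j using phase_cases with
  | zero =>
    rw [zero_add, switchTime_one] at hfin ⊢
    exact hzero s hs ⟨h₁, h₂⟩ hfin
  | up k =>
    rw [show 2 * k + 1 + 1 = 2 * k + 2 from rfl, switchTime_even] at hfin ⊢
    exact hup k s hs ⟨h₁, h₂⟩ hfin
  | down k =>
    rw [show 2 * k + 2 + 1 = 2 * (k + 1) + 1 by ring, switchTime_odd] at hfin ⊢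
    exact hdown k s hs ⟨h₁, h₂⟩ hfin

theorem Cadlag.monotoneOn_upPart (hX : Cadlag X) (hc : 0 < c) :
    MonotoneOn (upPart X c) (Ici 0) := by
  refine hX.monotoneOn_of_inPhase hc (fun j s t hs hst hsj htj => ?_) (fun s _ hs hfin => ?_)
    (fun k s hs₀ hs hfin => ?_) (fun k s _ hs hfin => ?_)
  · induction j using phase_cases with
    | zero => rw [upPart, byPhase_of_inPhase_zero hsj, byPhase_of_inPhase_zero htj]
    | up k =>
      rw [upPart, byPhase_of_inPhase_up hsj, byPhase_of_inPhase_up htj]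
      have := supOn_mono (hX.bddAbove (upTime X c k) t)
        (ENNReal.toReal_le_of_le_ofReal hs (inPhase_up_iff.mp hsj).1) hst
      linarith
    | down k => rw [upPart, byPhase_of_inPhase_down hsj, byPhase_of_inPhase_down htj]
  · rw [upPart, byPhase_of_inPhase_zero hs, byPhase_of_inPhase_up (hX.inPhase_upTime hc hfin),
      supOn_self]
    linarith [hX.le_sub_X_zero_upTime_zero hfin, show upLevel X c 0 = -X 0 - c from rfl]
  · rw [upPart, byPhase_of_inPhase_up hs, byPhase_of_inPhase_down (hX.inPhase_downTime hc hfin)]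
    have := supOn_mono (hX.bddAbove (upTime X c k) (downTime X c k))
      (ENNReal.toReal_le_of_le_ofReal hs₀ (inPhase_up_iff.mp hs).1)
      ((ENNReal.ofReal_lt_iff_lt_toReal hs₀ hfin).mp (inPhase_up_iff.mp hs).2).le
    rw [peak]
    linarith
  · rw [upPart, byPhase_of_inPhase_down hs, byPhase_of_inPhase_up (hX.inPhase_upTime hc hfin),
      supOn_self, upLevel]
    linarith [hX.two_mul_le_sub_trough hfin]

theorem Cadlag.monotoneOn_downPart (hX : Cadlag X) (hc : 0 < c) :
    MonotoneOn (downPart X c) (Ici 0) := by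
  refine hX.monotoneOn_of_inPhase hc (fun j s t hs hst hsj htj => ?_) (fun s _ hs hfin => ?_)
    (fun k s _ hs hfin => ?_) (fun k s hs₀ hs hfin => ?_)
  · induction j using phase_cases with
    | zero => rw [downPart, byPhase_of_inPhase_zero hsj, byPhase_of_inPhase_zero htj]
    | up k => rw [downPart, byPhase_of_inPhase_up hsj, byPhase_of_inPhase_up htj]
    | down k =>
      rw [downPart, byPhase_of_inPhase_down hsj, byPhase_of_inPhase_down htj]
      have := infOn_anti (hX.bddBelow (downTime X c k) t)
        (ENNReal.toReal_le_of_le_ofReal hs (inPhase_down_iff.mp hsj).1) hst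
      linarith
  · rw [downPart, byPhase_of_inPhase_zero hs, byPhase_of_inPhase_up (hX.inPhase_upTime hc hfin),
      upLevel]
    linarith
  · rw [downPart, byPhase_of_inPhase_up hs, byPhase_of_inPhase_down (hX.inPhase_downTime hc hfin),
      infOn_self]
    linarith [hX.two_mul_le_peak_sub hfin]
  · rw [downPart, byPhase_of_inPhase_down hs, byPhase_of_inPhase_up (hX.inPhase_upTime hc hfin),
      upLevel]
    have := infOn_anti (hX.bddBelow (downTime X c k) (upTime X c (k + 1)))
      (ENNReal.toReal_le_of_le_ofReal hs₀ (inPhase_down_iff.mp hs).1)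
      ((ENNReal.ofReal_lt_iff_lt_toReal hs₀ hfin).mp (inPhase_down_iff.mp hs).2).le
    rw [trough]
    linarith

end Decomposition

/-- Some chain `t₀ ≤ ⋯ ≤ tₙ = p` in `[0, p]` has `θ`-truncated sum at least `v`, the terms
`|Δf| - θ` not being clipped at `0`. -/
def TruncChain (f : ℝ → ℝ) (θ p v : ℝ) : Prop :=
  ∃ n : ℕ, ∃ t : ℕ → ℝ, Monotone t ∧ (∀ i, t i ∈ Icc 0 p) ∧ t n = p ∧
    v ≤ ∑ i ∈ Finset.range n, (|f (t (i + 1)) - f (t i)| - θ)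

section TruncChain

variable {f : ℝ → ℝ} {θ p q v w T : ℝ}

theorem truncChain_zero : TruncChain f θ 0 0 :=
  ⟨0, fun _ => 0, monotone_const, fun _ => left_mem_Icc.mpr le_rfl, rfl, by simp⟩

theorem TruncChain.mono (h : TruncChain f θ p v) (hwv : w ≤ v) : TruncChain f θ p w :=
  let ⟨n, t, ht, htp, htn, hv⟩ := h
  ⟨n, t, ht, htp, htn, hwv.trans hv⟩

theorem TruncChain.snoc (h : TruncChain f θ p v) (hpq : p ≤ q) :
    TruncChain f θ q (v + (|f q - f p| - θ)) := by
  obtain ⟨n, t, ht, htp, rfl, hv⟩ := h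
  refine ⟨n + 1, fun i => if i ≤ n then t i else q, fun i j hij => ?_, fun i => ?_,
    if_neg (by omega), ?_⟩
  · dsimp only
    split_ifs with hi hj hj
    · exact ht hij
    · exact (ht hi).trans hpq
    · omega
    · exact le_rfl
  · dsimp only
    split_ifs
    · exact ⟨(htp i).1, (htp i).2.trans hpq⟩
    · exact ⟨(htp n).1.trans hpq, le_rfl⟩
  · rw [Finset.sum_range_succ]
    dsimp only
    rw [if_neg (by omega), if_pos le_rfl]
    refine add_le_add (hv.trans_eq (Finset.sum_congr rfl fun i hi => ?_)) le_rfl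
    have := Finset.mem_range.mp hi
    rw [if_pos (by omega), if_pos (by omega)]

theorem ofReal_le_TVtrunc_of_forall_lt (h : ∀ v < w, ∃ p ≤ T, TruncChain f θ p v) :
    ENNReal.ofReal w ≤ TVtrunc f θ T := by
  refine le_of_forall_lt_imp_le_of_dense fun r hr => ?_
  obtain ⟨p, hpT, n, t, ht, htp, -, hv⟩ := h r.toReal (ENNReal.toReal_lt_of_lt_ofReal hr)
  calc r = ENNReal.ofReal r.toReal := (ENNReal.ofReal_toReal hr.ne_top).symm
    _ ≤ ENNReal.ofReal (∑ i ∈ Finset.range n, (|f (t (i + 1)) - f (t i)| - θ)) :=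
      ENNReal.ofReal_le_ofReal hv
    _ ≤ ∑ i ∈ Finset.range n, ENNReal.ofReal (|f (t (i + 1)) - f (t i)| - θ) :=
      Finset.le_sum_of_subadditive _ ENNReal.ofReal_zero.le (fun _ _ => ENNReal.ofReal_add_le) _ _
    _ ≤ TVtrunc f θ T :=
      le_iSup_of_le n <| le_iSup_of_le t <| le_iSup_of_le ht <|
        le_iSup_of_le (fun i => ⟨(htp i).1, (htp i).2.trans hpT⟩) le_rfl

end TruncChain

section RightInequality

variable {X : ℝ → ℝ} {c : ℝ} {k : ℕ} {T : ℝ}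

theorem truncChain_down_of_up (hfin : Td X c k ≠ ⊤)
    (hup : ∀ p, upTime X c k ≤ p → ∀ v < 2 * upLevel X c k + X p + X 0,
      TruncChain X (2 * c) p v) :
    ∀ q, downTime X c k ≤ q → ∀ v < 2 * (upLevel X c k + peak X c k) - X q + X 0 - 2 * c,
      TruncChain X (2 * c) q v := by
  intro q hq v hv
  obtain ⟨p, hp, hXp⟩ := exists_lt_of_lt_supOn (ENNReal.toReal_mono hfin Tu_le_Td)
    (show (v + X q - X 0 + 2 * c) / 2 - upLevel X c k < peak X c k by linarith)
  refine ((hup p hp.1 (v - (X p - X q - 2 * c)) (by linarith)).snoc (hp.2.trans hq)).mono ?_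
  linarith [neg_abs_le (X q - X p)]

/-- At a time `p` of up phase `k` where `X p` is the running maximum, the bound
`2 * upLevel X c k + X p + X 0` equals `upPart X c p + downPart X c p + X 0 - c`. -/
theorem truncChain_up : ∀ k, Tu X c k ≠ ⊤ → ∀ p, upTime X c k ≤ p →
    ∀ v < 2 * upLevel X c k + X p + X 0, TruncChain X (2 * c) p v
  | 0, _, p, hp, v, hv => by
    refine (truncChain_zero.snoc (ENNReal.toReal_nonneg.trans hp)).mono ?_
    linarith [le_abs_self (X p - X 0), show upLevel X c 0 = -X 0 - c from rfl]
  | k + 1, hfin, p, hp, v, hv => by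
    have hTd : Td X c k ≠ ⊤ := ne_top_of_le_ne_top hfin Td_le_Tu_succ
    have hdown := truncChain_down_of_up hTd
      (truncChain_up k (ne_top_of_le_ne_top hTd Tu_le_Td))
    rw [upLevel] at hv
    obtain ⟨q, hq, hXq⟩ := exists_lt_of_infOn_lt (ENNReal.toReal_mono hfin Td_le_Tu_succ)
      (show trough X c k < (2 * (upLevel X c k + peak X c k) + X p + X 0 - 4 * c - v) / 2 by
        linarith)
    refine ((hdown q hq.1 (v - (X p - X q - 2 * c)) (by linarith)).snoc (hq.2.trans hp)).mono ?_
    linarith [le_abs_self (X p - X q)]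

theorem Cadlag.upPart_add_downPart_le (hX : Cadlag X) (hc : 0 < c) (hT : 0 ≤ T) :
    ENNReal.ofReal (upPart X c T + downPart X c T + X 0) ≤
      TVtrunc X (2 * c) T + ENNReal.ofReal (2 * c) := by
  suffices h : ∀ v < upPart X c T + downPart X c T + X 0 - 2 * c,
      ∃ p ≤ T, TruncChain X (2 * c) p v by
    calc ENNReal.ofReal (upPart X c T + downPart X c T + X 0)
        = ENNReal.ofReal ((upPart X c T + downPart X c T + X 0 - 2 * c) + 2 * c) := by ring_nf
      _ ≤ ENNReal.ofReal (upPart X c T + downPart X c T + X 0 - 2 * c) +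
          ENNReal.ofReal (2 * c) := ENNReal.ofReal_add_le
      _ ≤ _ := add_le_add_left (ofReal_le_TVtrunc_of_forall_lt h) _
  intro v hv
  obtain ⟨j, hj⟩ := hX.exists_inPhase hc T
  induction j using phase_cases with
  | zero =>
    rw [upPart, downPart, byPhase_of_inPhase_zero hj, byPhase_of_inPhase_zero hj] at hv
    exact ⟨0, hT, truncChain_zero.mono (by linarith)⟩
  | up k =>
    obtain ⟨h₁, -⟩ := inPhase_up_iff.mp hj
    rw [upPart, downPart, byPhase_of_inPhase_up hj, byPhase_of_inPhase_up hj] at hv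
    obtain ⟨p, hp, hXp⟩ := exists_lt_of_lt_supOn (ENNReal.toReal_le_of_le_ofReal hT h₁)
      (show v - 2 * upLevel X c k - X 0 < supOn X (upTime X c k) T by linarith)
    exact ⟨p, hp.2, truncChain_up k (ne_top_of_le_ne_top ENNReal.ofReal_ne_top h₁) p hp.1 v
      (by linarith)⟩
  | down k =>
    obtain ⟨h₁, -⟩ := inPhase_down_iff.mp hj
    have hTd : Td X c k ≠ ⊤ := ne_top_of_le_ne_top ENNReal.ofReal_ne_top h₁
    rw [upPart, downPart, byPhase_of_inPhase_down hj, byPhase_of_inPhase_down hj] at hv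
    obtain ⟨q, hq, hXq⟩ := exists_lt_of_infOn_lt (ENNReal.toReal_le_of_le_ofReal hT h₁)
      (show infOn X (downTime X c k) T < 2 * (upLevel X c k + peak X c k) + X 0 - 2 * c - v by
        linarith)
    exact ⟨q, hq.2, truncChain_down_of_up hTd
      (truncChain_up k (ne_top_of_le_ne_top hTd Tu_le_Td)) q hq.1 v (by linarith)⟩

theorem Cadlag.eVariationOn_Xc_le (hX : Cadlag X) (hc : 0 < c) (hT : 0 ≤ T) :
    eVariationOn (Xc X c) (Icc 0 T) ≤ TVtrunc X (2 * c) T + ENNReal.ofReal (2 * c) := by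
  have h₀ : InPhase X c (ENNReal.ofReal 0) 0 :=
    inPhase_zero_iff.mpr (by simpa using hX.Tu_zero_pos hc)
  have hup := (hX.monotoneOn_upPart hc).mono (Icc_subset_Ici_self : Icc 0 T ⊆ Ici 0)
  have hdown := (hX.monotoneOn_downPart hc).mono (Icc_subset_Ici_self : Icc 0 T ⊆ Ici 0)
  have hT' : T ∈ Icc 0 T := right_mem_Icc.mpr hT
  have h0T : (0 : ℝ) ∈ Icc 0 T := left_mem_Icc.mpr hT
  calc eVariationOn (Xc X c) (Icc 0 T)
      ≤ ENNReal.ofReal (upPart X c T - upPart X c 0) +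
          ENNReal.ofReal (downPart X c T - downPart X c 0) :=
        Xc_eq_upPart_sub_downPart (X := X) ▸ hup.eVariationOn_sub_le hdown hT
    _ = ENNReal.ofReal (upPart X c T + downPart X c T + X 0) := by
        have hup₀ : upPart X c 0 = 0 := byPhase_of_inPhase_zero h₀
        have hdown₀ : downPart X c 0 = -X 0 := byPhase_of_inPhase_zero h₀
        rw [← ENNReal.ofReal_add (by linarith [hup h0T hT' hT]) (by linarith [hdown h0T hT' hT]),
          hup₀, hdown₀]
        ring_nf
    _ ≤ _ := hX.upPart_add_downPart_le hc hT

end RightInequality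

/-- two-sided estimate for the total variation of `X^c`:
`TV^{2c}(X,T) ≤ TV(X^c,T) ≤ TV^{2c}(X,T) + 2c`. -/
theorem stmt_6 (X : ℝ → ℝ) (hX : Cadlag X) (c : ℝ) (hc : 0 < c)
    (hud : Tu X c 0 ≤ TdIni X c) (T : ℝ) (hT : 0 < T) :
    TVtrunc X (2 * c) T ≤ eVariationOn (Xc X c) (Icc 0 T) ∧
    eVariationOn (Xc X c) (Icc 0 T) ≤ TVtrunc X (2 * c) T + ENNReal.ofReal (2 * c) :=
  ⟨TVtrunc_le_eVariationOn_of_abs_sub_le fun _ hs => hX.abs_sub_Xc_le hc hud hs.1,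
    hX.eVariationOn_Xc_le hc hT.le⟩

end
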